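/- arXiv:2406.17945 — 2 statements merged into one kernel-verified Lean document; each statement's English description precedes it below -/
import Mathlib

section
/- Let u be a unit timelike vector field on a Lorentzian 4-manifold, Δ_a^b = δ_a^b + u_a u^b the orthogonal projection, and 𝒟 the Weyl derivative built from 𝒜_a = u^b∇_b u_a − (1/3)(∇_b u^b) u_a with connection coefficients C^a_{bc} = g_{cb} g^{ad} 𝒜_d − δ^a_c 𝒜_b − δ^a_b 𝒜_c and weight w(u) = 1. Then 𝒟_a u^b = Δ_a^c ∇_c u^b − (1/3)(∇_c u^c) Δ_a^b. -/
open Finset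

/-- Lowered velocity `u_a = g_{ab} u^b`. -/
noncomputable def ulow (g : Fin 4 → Fin 4 → ℝ) (u : Fin 4 → ℝ) (a : Fin 4) : ℝ := ∑ b, g a b * u b

/-- Divergence `∇_a u^a` of the matrix `Du a b = ∇_a u^b`. -/
noncomputable def diverg (Du : Fin 4 → Fin 4 → ℝ) : ℝ := ∑ a, Du a a

/-- Kronecker delta. -/
noncomputable def kron (a b : Fin 4) : ℝ := if a = b then 1 else 0

/-- The acceleration one-form `𝒜_a = u^b ∇_b u_a − (1/3)(∇_b u^b) u_a`. -/
noncomputable def accA (g : Fin 4 → Fin 4 → ℝ) (u : Fin 4 → ℝ) (Du : Fin 4 → Fin 4 → ℝ)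
    (a : Fin 4) : ℝ :=
  (∑ b, u b * (∑ c, g a c * Du b c)) - (1 / 3) * diverg Du * ulow g u a

/-- Weyl connection coefficients `C^a_{bc} = g_{cb} g^{ad}𝒜_d − δ^a_c 𝒜_b − δ^a_b 𝒜_c`. -/
noncomputable def weylC (g ginv : Fin 4 → Fin 4 → ℝ) (A : Fin 4 → ℝ) (a b c : Fin 4) : ℝ :=
  g c b * (∑ d, ginv a d * A d) - kron a c * A b - kron a b * A c

/-- Weyl derivative `𝒟_a u^b` of the weight-one vector field `u`:
`𝒟_a u^b = ∇_a u^b + 𝒜_a u^b + C^b_{ad} u^d`. -/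
noncomputable def weylDu (g ginv Du : Fin 4 → Fin 4 → ℝ) (u A : Fin 4 → ℝ) (a b : Fin 4) : ℝ :=
  Du a b + A a * u b + ∑ d, weylC g ginv A b a d * u d

/-- For a unit timelike `u` (weight one), with
`𝒜_a = u^b∇_bu_a − (1/3)(∇_bu^b)u_a`, one has
`𝒟_a u^b = Δ_a^c ∇_c u^b − (1/3)(∇_c u^c) Δ_a^b` where `Δ_a^b = δ_a^b + u_a u^b`. -/
theorem weyl_derivative_of_velocity (g ginv Du : Fin 4 → Fin 4 → ℝ) (u : Fin 4 → ℝ)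
    (hgsymm : ∀ a b, g a b = g b a)
    (hginv : ∀ a b, ∑ c, ginv a c * g c b = kron a b)
    (hginv' : ∀ a b, ∑ c, g a c * ginv c b = kron a b)
    (hunit : ∑ a, ulow g u a * u a = -1)
    (horth : ∀ a, ∑ b, Du a b * ulow g u b = 0) :
    ∀ a b, weylDu g ginv Du u (accA g u Du) a b =
      (∑ c, (kron a c + ulow g u a * u c) * Du c b)
        - (1 / 3) * diverg Du * (kron a b + ulow g u a * u b) := by
  intro a b
  have hkron : ∀ (X : Fin 4 → ℝ) (c : Fin 4), (∑ d, kron c d * X d) = X c := by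
    intro X c; simp [kron]
  -- inverse metric contraction: ∑_d ginv b d * (∑_c g d c * X c) = X b
  have hB : ∀ (X : Fin 4 → ℝ) (b : Fin 4), (∑ d, ginv b d * (∑ c, g d c * X c)) = X b := by
    intro X b
    calc (∑ d, ginv b d * (∑ c, g d c * X c))
        = ∑ d, ∑ c, (ginv b d * g d c) * X c := by
          refine Finset.sum_congr rfl fun d _ => ?_
          rw [Finset.mul_sum]; exact Finset.sum_congr rfl fun c _ => by ring
      _ = ∑ c, (∑ d, ginv b d * g d c) * X c := by
          rw [Finset.sum_comm]
          exact Finset.sum_congr rfl fun c _ => (Finset.sum_mul _ _ _).symm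
      _ = ∑ c, kron b c * X c := Finset.sum_congr rfl fun c _ => by rw [hginv]
      _ = X b := by simp [kron]
  have hup : ∀ b, (∑ d, ginv b d * ulow g u d) = u b := fun b => hB u b
  -- contraction of acceleration with ginv
  have hS : ∀ b, (∑ d, ginv b d * accA g u Du d)
      = (∑ e, u e * Du e b) - (1 / 3) * diverg Du * u b := by
    intro b
    have e1 : (∑ d, ginv b d * accA g u Du d)
        = (∑ d, ginv b d * (∑ e, u e * (∑ c, g d c * Du e c)))
          - (1 / 3) * diverg Du * (∑ d, ginv b d * ulow g u d) := by
      simp only [accA, mul_sub, Finset.sum_sub_distrib, Finset.mul_sum]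
      congr 1
      exact Finset.sum_congr rfl fun d _ => by ring
    rw [e1, hup]
    congr 1
    calc (∑ d, ginv b d * (∑ e, u e * (∑ c, g d c * Du e c)))
        = ∑ d, ∑ e, u e * (ginv b d * (∑ c, g d c * Du e c)) := by
          refine Finset.sum_congr rfl fun d _ => ?_
          rw [Finset.mul_sum]; exact Finset.sum_congr rfl fun e _ => by ring
      _ = ∑ e, u e * (∑ d, ginv b d * (∑ c, g d c * Du e c)) := by
          rw [Finset.sum_comm]
          exact Finset.sum_congr rfl fun e _ => (Finset.mul_sum _ _ _).symm
      _ = ∑ e, u e * Du e b := Finset.sum_congr rfl fun e _ => by rw [hB (Du e) b]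
  -- contraction of acceleration with u
  have hAu : (∑ d, accA g u Du d * u d) = (1 / 3) * diverg Du := by
    have e1 : (∑ d, accA g u Du d * u d)
        = (∑ d, u d * (∑ e, u e * (∑ c, g d c * Du e c)))
          - (1 / 3) * diverg Du * (∑ d, ulow g u d * u d) := by
      calc (∑ d, accA g u Du d * u d)
          = ∑ d, (u d * (∑ e, u e * (∑ c, g d c * Du e c))
              - (1 / 3) * diverg Du * (ulow g u d * u d)) := by
            refine Finset.sum_congr rfl fun d _ => ?_
            rw [accA]; ring
        _ = _ := by rw [Finset.sum_sub_distrib, Finset.mul_sum]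
    rw [e1, hunit]
    have e2 : (∑ d, u d * (∑ e, u e * (∑ c, g d c * Du e c)))
        = ∑ e, u e * (∑ c, Du e c * ulow g u c) := by
      calc (∑ d, u d * (∑ e, u e * (∑ c, g d c * Du e c)))
          = ∑ d, ∑ e, ∑ c, u e * (Du e c * (g c d * u d)) := by
            refine Finset.sum_congr rfl fun d _ => ?_
            rw [Finset.mul_sum]
            refine Finset.sum_congr rfl fun e _ => ?_
            rw [Finset.mul_sum, Finset.mul_sum]
            exact Finset.sum_congr rfl fun c _ => by rw [hgsymm d c]; ring
        _ = ∑ e, ∑ c, ∑ d, u e * (Du e c * (g c d * u d)) := by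
            rw [Finset.sum_comm]
            exact Finset.sum_congr rfl fun e _ => Finset.sum_comm
        _ = ∑ e, u e * (∑ c, Du e c * ulow g u c) := by
            refine Finset.sum_congr rfl fun e _ => ?_
            rw [Finset.mul_sum]
            refine Finset.sum_congr rfl fun c _ => ?_
            rw [ulow, Finset.mul_sum, Finset.mul_sum]
    rw [e2]
    simp only [horth]
    simp
  -- expand the connection term
  have hC : (∑ d, weylC g ginv (accA g u Du) b a d * u d)
      = ulow g u a * (∑ d, ginv b d * accA g u Du d)
        - accA g u Du a * u b - kron a b * ((1 / 3) * diverg Du) := by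
    have e1 : (∑ d, weylC g ginv (accA g u Du) b a d * u d)
        = (∑ d, g a d * u d) * (∑ d, ginv b d * accA g u Du d)
          - accA g u Du a * (∑ d, kron b d * u d)
          - kron b a * (∑ d, accA g u Du d * u d) := by
      calc (∑ d, weylC g ginv (accA g u Du) b a d * u d)
          = ∑ d, (g a d * u d * (∑ e, ginv b e * accA g u Du e)
              - accA g u Du a * (kron b d * u d)
              - kron b a * (accA g u Du d * u d)) := by
            refine Finset.sum_congr rfl fun d _ => ?_
            rw [weylC, hgsymm d a]; ring
        _ = (∑ d, g a d * u d * (∑ e, ginv b e * accA g u Du e))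
              - (∑ d, accA g u Du a * (kron b d * u d))
              - (∑ d, kron b a * (accA g u Du d * u d)) := by
            rw [Finset.sum_sub_distrib, Finset.sum_sub_distrib]
        _ = _ := by rw [Finset.sum_mul, Finset.mul_sum, Finset.mul_sum]
    rw [e1, hkron u b, hAu]
    have hk : kron b a = kron a b := by simp [kron, eq_comm]
    rw [hk]
    rfl
  have hRHS : (∑ c, (kron a c + ulow g u a * u c) * Du c b)
      = Du a b + ulow g u a * (∑ e, u e * Du e b) := by
    have : (∑ c, (kron a c + ulow g u a * u c) * Du c b)
        = (∑ c, kron a c * Du c b) + ulow g u a * (∑ e, u e * Du e b) := by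
      rw [Finset.mul_sum, ← Finset.sum_add_distrib]
      exact Finset.sum_congr rfl fun c _ => by ring
    rw [this, hkron (fun c => Du c b) a]
  rw [weylDu, hC, hS, hRHS]
  ring
end

section
/- For X, Y tangent to the spacelike hypersurface Σ, the spacetime shear satisfies σ_{ab} X^a Y^b = [γ 𝒦_{ab} + (1/2)(𝒟^Σ_a v_b + 𝒟^Σ_b v_a)] X^a Y^b, where 𝒦 is the Weyl second fundamental form and v is the tangential part of u = γN + v. -/
open Finset

/-- Lowered index: `X_a = g_{ab} X^b`. -/
noncomputable def lower (g : Fin 4 → Fin 4 → ℝ) (X : Fin 4 → ℝ) (a : Fin 4) : ℝ :=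
  ∑ b, g a b * X b

/-- For `X`, `Y` tangent to the slice,
`σ_{ab}X^aY^b = [γ𝒦_{ab} + (1/2)(𝒟^Σ_av_b + 𝒟^Σ_bv_a)]X^aY^b`, where
`σ_{ab} = (1/2)(𝒟_au_b + 𝒟_bu_a)` is the shear of `u = γN + v`, `𝒦` is the Weyl
second fundamental form, and `𝒟^Σ` the induced Weyl derivative on the slice. -/
theorem shear_tangential_formula
    (g Kw Du DN Dv Dsv : Fin 4 → Fin 4 → ℝ) (N v Dγ : Fin 4 → ℝ) (γ : ℝ)
    (hgsymm : ∀ a b, g a b = g b a)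
    (hNN : ∑ a, lower g N a * N a = -1)
    (hvtang : ∑ a, lower g N a * v a = 0)
    (hKwsymm : ∀ a b, Kw a b = Kw b a)
    -- Leibniz rule: `𝒟_a u^b = (𝒟_a γ)N^b + γ 𝒟_a N^b + 𝒟_a v^b`
    (hsplit : ∀ a b, Du a b = Dγ a * N b + γ * DN a b + Dv a b)
    -- `X^a g_{bc}(𝒟_a N^b)Y^c = 𝒦_{ab}X^aY^b` for tangent `X`, `Y`
    (hKN : ∀ X Y : Fin 4 → ℝ, (∑ a, lower g N a * X a) = 0 →
      (∑ a, lower g N a * Y a) = 0 →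
      ∑ a, ∑ c, X a * Y c * (∑ b, g b c * DN a b) = ∑ a, ∑ b, Kw a b * X a * Y b)
    -- `X^a 𝒟_a v^b = X^a 𝒟^Σ_a v^b + 𝒦_{ac}X^av^c N^b` for tangent `X`
    (hDv : ∀ X : Fin 4 → ℝ, (∑ a, lower g N a * X a) = 0 → ∀ b,
      ∑ a, X a * Dv a b
        = (∑ a, X a * Dsv a b) + (∑ a, ∑ c, Kw a c * X a * v c) * N b) :
    ∀ X Y : Fin 4 → ℝ, (∑ a, lower g N a * X a) = 0 →
      (∑ a, lower g N a * Y a) = 0 →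
      (1 / 2) * ∑ a, ∑ b, X a * Y b *
          ((∑ c, g b c * Du a c) + (∑ c, g a c * Du b c))
        = ∑ a, ∑ b,
            (γ * Kw a b
              + (1 / 2) *
                ((∑ c, (g b c + lower g N b * lower g N c) * Dsv a c)
                  + (∑ c, (g a c + lower g N a * lower g N c) * Dsv b c)))
              * X a * Y b := by
  intro X Y hX hY
  have hfac : ∀ (f h : Fin 4 → ℝ),
      (∑ a, ∑ b, f a * h b) = (∑ a, f a) * (∑ b, h b) := by
    intro f h
    exact (Finset.sum_mul_sum _ _ f h).symm
  -- Key lemma: the unsymmetrized contraction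
  have key : ∀ Z W : Fin 4 → ℝ, (∑ a, lower g N a * Z a) = 0 →
      (∑ a, lower g N a * W a) = 0 →
      (∑ a, ∑ b, Z a * W b * (∑ c, g b c * Du a c))
        = γ * (∑ a, ∑ b, Kw a b * Z a * W b)
          + ∑ a, ∑ b, ∑ c, Z a * W b * (g b c * Dsv a c) := by
    intro Z W hZ hW
    have hW' : (∑ b, W b * lower g N b) = 0 := by
      rw [← hW]; exact Finset.sum_congr rfl fun b _ => mul_comm _ _
    have e : ∀ a b, Z a * W b * (∑ c, g b c * Du a c)
        = (Z a * Dγ a) * (W b * lower g N b)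
          + γ * (Z a * W b * (∑ c, g b c * DN a c))
          + (∑ c, (W b * g b c) * (Z a * Dv a c)) := by
      intro a b
      simp only [hsplit, lower, Fin.sum_univ_four]
      ring
    have hA : (∑ a, ∑ b, (Z a * Dγ a) * (W b * lower g N b)) = 0 := by
      rw [hfac, hW', mul_zero]
    have hγ : (∑ a, ∑ b, γ * (Z a * W b * (∑ c, g b c * DN a c)))
        = γ * ∑ a, ∑ b, Z a * W b * (∑ c, g b c * DN a c) := by
      simp only [← Finset.mul_sum]
    have hB : (∑ a, ∑ b, Z a * W b * (∑ c, g b c * DN a c))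
        = ∑ a, ∑ b, Kw a b * Z a * W b := by
      rw [← hKN Z W hZ hW]
      refine Finset.sum_congr rfl fun a _ => Finset.sum_congr rfl fun b _ => ?_
      exact congrArg (fun t => Z a * W b * t)
        (Finset.sum_congr rfl fun c _ => by rw [hgsymm])
    have hC : (∑ a, ∑ b, ∑ c, (W b * g b c) * (Z a * Dv a c))
        = ∑ a, ∑ b, ∑ c, Z a * W b * (g b c * Dsv a c) := by
      have h1 : (∑ a, ∑ b, ∑ c, (W b * g b c) * (Z a * Dv a c))
          = ∑ b, ∑ c, (W b * g b c) * (∑ a, Z a * Dv a c) := by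
        rw [Finset.sum_comm]
        refine Finset.sum_congr rfl fun b _ => ?_
        rw [Finset.sum_comm]
        exact Finset.sum_congr rfl fun c _ => (Finset.mul_sum _ _ _).symm
      have h2 : (∑ a, ∑ b, ∑ c, Z a * W b * (g b c * Dsv a c))
          = ∑ b, ∑ c, (W b * g b c) * (∑ a, Z a * Dsv a c) := by
        rw [Finset.sum_comm]
        refine Finset.sum_congr rfl fun b _ => ?_
        rw [Finset.sum_comm]
        refine Finset.sum_congr rfl fun c _ => ?_
        rw [Finset.mul_sum]
        exact Finset.sum_congr rfl fun a _ => by ring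
      rw [h1, h2]
      simp only [hDv Z hZ, mul_add, Finset.sum_add_distrib]
      have hzero : (∑ b, ∑ c, (W b * g b c)
          * ((∑ a, ∑ c', Kw a c' * Z a * v c') * N c)) = 0 := by
        have e2 : ∀ b, (∑ c, (W b * g b c) * ((∑ a, ∑ c', Kw a c' * Z a * v c') * N c))
            = (∑ a, ∑ c', Kw a c' * Z a * v c') * (W b * lower g N b) := by
          intro b
          simp only [lower, Fin.sum_univ_four]
          ring
        rw [Finset.sum_congr rfl fun b _ => e2 b, ← Finset.mul_sum, hW', mul_zero]
      rw [hzero, add_zero]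
    calc (∑ a, ∑ b, Z a * W b * (∑ c, g b c * Du a c))
        = ∑ a, ∑ b, ((Z a * Dγ a) * (W b * lower g N b)
            + γ * (Z a * W b * (∑ c, g b c * DN a c))
            + (∑ c, (W b * g b c) * (Z a * Dv a c))) :=
          Finset.sum_congr rfl fun a _ => Finset.sum_congr rfl fun b _ => e a b
      _ = (∑ a, ∑ b, (Z a * Dγ a) * (W b * lower g N b))
            + (∑ a, ∑ b, γ * (Z a * W b * (∑ c, g b c * DN a c)))
            + (∑ a, ∑ b, ∑ c, (W b * g b c) * (Z a * Dv a c)) := by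
          simp only [Finset.sum_add_distrib]
      _ = γ * (∑ a, ∑ b, Kw a b * Z a * W b)
            + ∑ a, ∑ b, ∑ c, Z a * W b * (g b c * Dsv a c) := by
          rw [hA, hγ, hB, hC, zero_add]
  -- swap lemma for the symmetrized term
  have hswap : (∑ a, ∑ b, X a * Y b * (∑ c, g a c * Du b c))
      = ∑ a, ∑ b, Y a * X b * (∑ c, g b c * Du a c) := by
    rw [Finset.sum_comm]
    exact Finset.sum_congr rfl fun a _ => Finset.sum_congr rfl fun b _ => by ring
  have hK2 : (∑ a, ∑ b, Kw a b * Y a * X b) = ∑ a, ∑ b, Kw a b * X a * Y b := by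
    rw [Finset.sum_comm]
    refine Finset.sum_congr rfl fun a _ => Finset.sum_congr rfl fun b _ => ?_
    rw [hKwsymm]; ring
  -- abbreviations
  set K1 : ℝ := ∑ a, ∑ b, Kw a b * X a * Y b with hK1
  set S1 : ℝ := ∑ a, ∑ b, ∑ c, X a * Y b * (g b c * Dsv a c) with hS1
  set S2 : ℝ := ∑ a, ∑ b, ∑ c, Y a * X b * (g b c * Dsv a c) with hS2
  -- RHS of the theorem equals γK1 + (1/2)S1 + (1/2)S2
  have hRHS : (∑ a, ∑ b,
        (γ * Kw a b
          + (1 / 2) *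
            ((∑ c, (g b c + lower g N b * lower g N c) * Dsv a c)
              + (∑ c, (g a c + lower g N a * lower g N c) * Dsv b c)))
          * X a * Y b)
      = γ * K1 + (1 / 2) * S1 + (1 / 2) * S2 := by
    have eexp : ∀ a b,
        (γ * Kw a b
          + (1 / 2) *
            ((∑ c, (g b c + lower g N b * lower g N c) * Dsv a c)
              + (∑ c, (g a c + lower g N a * lower g N c) * Dsv b c)))
          * X a * Y b
        = γ * (Kw a b * X a * Y b)
          + (1 / 2) * (∑ c, X a * Y b * (g b c * Dsv a c))
          + (1 / 2) * ((X a * (∑ c, lower g N c * Dsv a c)) * (lower g N b * Y b))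
          + (1 / 2) * (∑ c, X a * Y b * (g a c * Dsv b c))
          + (1 / 2) * ((lower g N a * X a) * (Y b * (∑ c, lower g N c * Dsv b c))) := by
      intro a b
      simp only [Fin.sum_univ_four]
      ring
    have hz1 : (∑ a, ∑ b, (X a * (∑ c, lower g N c * Dsv a c)) * (lower g N b * Y b)) = 0 := by
      rw [hfac, hY, mul_zero]
    have hz2 : (∑ a, ∑ b, (lower g N a * X a) * (Y b * (∑ c, lower g N c * Dsv b c))) = 0 := by
      rw [hfac, hX, zero_mul]
    have ht4 : (∑ a, ∑ b, ∑ c, X a * Y b * (g a c * Dsv b c)) = S2 := by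
      rw [hS2, Finset.sum_comm]
      exact Finset.sum_congr rfl fun a _ => Finset.sum_congr rfl fun b _ =>
        Finset.sum_congr rfl fun c _ => by ring
    calc (∑ a, ∑ b,
          (γ * Kw a b
            + (1 / 2) *
              ((∑ c, (g b c + lower g N b * lower g N c) * Dsv a c)
                + (∑ c, (g a c + lower g N a * lower g N c) * Dsv b c)))
            * X a * Y b)
        = ∑ a, ∑ b,
            (γ * (Kw a b * X a * Y b)
              + (1 / 2) * (∑ c, X a * Y b * (g b c * Dsv a c))
              + (1 / 2) * ((X a * (∑ c, lower g N c * Dsv a c)) * (lower g N b * Y b))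
              + (1 / 2) * (∑ c, X a * Y b * (g a c * Dsv b c))
              + (1 / 2) * ((lower g N a * X a) * (Y b * (∑ c, lower g N c * Dsv b c)))) :=
          Finset.sum_congr rfl fun a _ => Finset.sum_congr rfl fun b _ => eexp a b
      _ = (∑ a, ∑ b, γ * (Kw a b * X a * Y b))
            + (∑ a, ∑ b, (1 / 2) * (∑ c, X a * Y b * (g b c * Dsv a c)))
            + (∑ a, ∑ b, (1 / 2) * ((X a * (∑ c, lower g N c * Dsv a c)) * (lower g N b * Y b)))
            + (∑ a, ∑ b, (1 / 2) * (∑ c, X a * Y b * (g a c * Dsv b c)))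
            + (∑ a, ∑ b, (1 / 2) * ((lower g N a * X a) * (Y b * (∑ c, lower g N c * Dsv b c)))) := by
          simp only [Finset.sum_add_distrib]
      _ = γ * K1
            + (1 / 2) * (∑ a, ∑ b, ∑ c, X a * Y b * (g b c * Dsv a c))
            + (1 / 2) * (∑ a, ∑ b, (X a * (∑ c, lower g N c * Dsv a c)) * (lower g N b * Y b))
            + (1 / 2) * (∑ a, ∑ b, ∑ c, X a * Y b * (g a c * Dsv b c))
            + (1 / 2) * (∑ a, ∑ b, (lower g N a * X a) * (Y b * (∑ c, lower g N c * Dsv b c))) := by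
          simp only [← Finset.mul_sum, hK1]
      _ = γ * K1 + (1 / 2) * S1 + (1 / 2) * S2 := by
          rw [hz1, hz2, ht4, ← hS1]; ring
  -- assemble
  calc (1 / 2) * ∑ a, ∑ b, X a * Y b *
          ((∑ c, g b c * Du a c) + (∑ c, g a c * Du b c))
      = (1 / 2) * ((∑ a, ∑ b, X a * Y b * (∑ c, g b c * Du a c))
          + (∑ a, ∑ b, X a * Y b * (∑ c, g a c * Du b c))) := by
        simp only [mul_add, Finset.sum_add_distrib]
    _ = (1 / 2) * ((γ * K1 + S1) + (γ * K1 + S2)) := by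
        rw [key X Y hX hY, hswap, key Y X hY hX, hK2, ← hK1, ← hS1, ← hS2]
    _ = γ * K1 + (1 / 2) * S1 + (1 / 2) * S2 := by ring
    _ = _ := hRHS.symm
end
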